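/- Suppose W₂(X,Y,Z,W) = 0 for all X,Y,Z,W ∈ V. Then the Ricci tensor satisfies S(Y,Z) = (r/n) g(Y,Z) for all Y,Z ∈ V. -/

import Mathlib

open scoped RealInnerProductSpace

/-!
Contracting `W₂ = 0` in its first and last slots gives
`S(Y,Z) + (S(Y,Z) - r g(Y,Z)) / (n - 1) = 0`, i.e. `n S(Y,Z) = r g(Y,Z)`.
-/

theorem isLinearMap_of_map_smul_add {R M N : Type*} [Semiring R] [AddCommMonoid M] [Module R M]
    [AddCommGroup N] [Module R N] {f : M → N}
    (hf : ∀ (c : R) (x y : M), f (c • x + y) = c • f x + f y) : IsLinearMap R f := by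
  have hf0 : f 0 = 0 := by simpa using hf 1 0 0
  exact ⟨fun x y => by simpa using hf 1 x y, fun c x => by simpa [hf0] using hf c x 0⟩

section

variable {ι V : Type*} [Fintype ι] [NormedAddCommGroup V] [InnerProductSpace ℝ V]

theorem OrthonormalBasis.sum_inner_mul_apply (b : OrthonormalBasis ι ℝ V) {f : V → ℝ}
    (hf : IsLinearMap ℝ f) (x : V) : ∑ i, ⟪b i, x⟫ * f (b i) = f x := by
  let F := hf.mk' f
  calc ∑ i, ⟪b i, x⟫ * F (b i) = F (∑ i, ⟪b i, x⟫ • b i) := by simp [map_sum]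
    _ = F x := by rw [b.sum_repr']

theorem OrthonormalBasis.sum_inner_mul_sub_inner_mul (b : OrthonormalBasis ι ℝ V)
    {S : V → V → ℝ} (hS : ∀ Y, IsLinearMap ℝ (S Y)) (Y Z : V) :
    ∑ i, (⟪b i, Z⟫ * S Y (b i) - ⟪Y, Z⟫ * S (b i) (b i))
      = S Y Z - ⟪Y, Z⟫ * ∑ i, S (b i) (b i) := by
  rw [Finset.sum_sub_distrib, b.sum_inner_mul_apply (hS Y), Finset.mul_sum]

end

theorem stmt6_general
    {V : Type*} [NormedAddCommGroup V] [InnerProductSpace ℝ V]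
    (n : ℕ) (hn : 3 < n)
    (e : Module.Basis (Fin n) ℝ V) (he : Orthonormal ℝ e)
    (Rb : V → V → V → V → ℝ)
    (hlin3 : ∀ (c : ℝ) (X Y Z Z' W : V),
      Rb X Y (c • Z + Z') W = c * Rb X Y Z W + Rb X Y Z' W)
    (S : V → V → ℝ) (hS : ∀ Y Z : V, S Y Z = ∑ i, Rb (e i) Y Z (e i))
    (r : ℝ) (hr : r = ∑ i, S (e i) (e i))
    (W2 : V → V → V → V → ℝ)
    (hW : ∀ X Y Z W : V, W2 X Y Z W =
      Rb X Y Z W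
      + (1 / ((n : ℝ) - 1)) * (⟪X, Z⟫ * S Y W - ⟪Y, Z⟫ * S X W))
    (hflat : ∀ X Y Z W : V, W2 X Y Z W = 0) :
    ∀ Y Z : V, S Y Z = (r / n) * ⟪Y, Z⟫ := by
  intro Y Z
  have h3n : (3 : ℝ) < n := by exact_mod_cast hn
  have hn0 : (n : ℝ) ≠ 0 := by linarith
  have hn1 : (n : ℝ) - 1 ≠ 0 := by linarith
  let b := e.toOrthonormalBasis he
  have hb : ⇑b = ⇑e := e.coe_toOrthonormalBasis he
  have hSlin : ∀ Y, IsLinearMap ℝ (S Y) := fun Y => isLinearMap_of_map_smul_add fun c Z Z' => by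
    simp only [hS, hlin3, Finset.sum_add_distrib, Finset.mul_sum, smul_eq_mul]
  have hRb : ∀ X W,
      Rb X Y Z W = -(1 / ((n : ℝ) - 1)) * (⟪X, Z⟫ * S Y W - ⟪Y, Z⟫ * S X W) :=
    fun X W => by linarith [hflat X Y Z W, hW X Y Z W]
  have htrace : S Y Z = -(1 / ((n : ℝ) - 1)) * (S Y Z - ⟪Y, Z⟫ * r) := by
    rw [hr, ← hb, ← b.sum_inner_mul_sub_inner_mul hSlin, Finset.mul_sum, hS, hb]
    exact Finset.sum_congr rfl fun i _ => hRb (e i) (e i)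
  field_simp at htrace ⊢
  linarith

theorem stmt6
    {V : Type*} [NormedAddCommGroup V] [InnerProductSpace ℝ V]
    (n : ℕ) (hn : 3 < n)
    (e : Module.Basis (Fin n) ℝ V) (he : Orthonormal ℝ e)
    (Rb : V → V → V → V → ℝ)
    (hlin1 : ∀ (c : ℝ) (X X' Y Z W : V),
      Rb (c • X + X') Y Z W = c * Rb X Y Z W + Rb X' Y Z W)
    (hlin2 : ∀ (c : ℝ) (X Y Y' Z W : V),
      Rb X (c • Y + Y') Z W = c * Rb X Y Z W + Rb X Y' Z W)
    (hlin3 : ∀ (c : ℝ) (X Y Z Z' W : V),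
      Rb X Y (c • Z + Z') W = c * Rb X Y Z W + Rb X Y Z' W)
    (hlin4 : ∀ (c : ℝ) (X Y Z W W' : V),
      Rb X Y Z (c • W + W') = c * Rb X Y Z W + Rb X Y Z W')
    (hskew1 : ∀ X Y Z W : V, Rb X Y Z W = - Rb Y X Z W)
    (hskew2 : ∀ X Y Z W : V, Rb X Y Z W = - Rb X Y W Z)
    (hpair : ∀ X Y Z W : V, Rb X Y Z W = Rb Z W X Y)
    (S : V → V → ℝ) (hS : ∀ Y Z : V, S Y Z = ∑ i, Rb (e i) Y Z (e i))
    (r : ℝ) (hr : r = ∑ i, S (e i) (e i))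
    (W2 : V → V → V → V → ℝ)
    (hW : ∀ X Y Z W : V, W2 X Y Z W =
      Rb X Y Z W
      + (1 / ((n : ℝ) - 1)) * (⟪X, Z⟫ * S Y W - ⟪Y, Z⟫ * S X W))
    (hflat : ∀ X Y Z W : V, W2 X Y Z W = 0) :
    ∀ Y Z : V, S Y Z = (r / n) * ⟪Y, Z⟫ :=
  stmt6_general n hn e he Rb hlin3 S hS r hr W2 hW hflat
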